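/- arXiv:1703.02388 — 2 statements merged into one kernel-verified Lean document; each statement's English description precedes it below -/
import Mathlib

section
/- Let u ≥ v ≥ 1 be integers. For every natural number n, μ(𝒯^{(u,v)}(2n+1)) equals the (2,1) entry of the matrix (L_u R_v)^n L_u. -/
open Matrix Finset

def Lm (u : ℕ) : Matrix (Fin 2) (Fin 2) ℕ := !![1, 0; u, 1]
def Rm (v : ℕ) : Matrix (Fin 2) (Fin 2) ℕ := !![1, v; 0, 1]

/-- The product of the matrices corresponding to a word: `false ↦ L_u`, `true ↦ R_v`. -/
def wordProd (u v : ℕ) (w : List Bool) : Matrix (Fin 2) (Fin 2) ℕ :=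
  (w.map (fun b => if b then Rm v else Lm u)).prod

/-- μ of a matrix: maximum of the four entries. -/
def matMax (M : Matrix (Fin 2) (Fin 2) ℕ) : ℕ :=
  max (max (M 0 0) (M 0 1)) (max (M 1 0) (M 1 1))

/-- μ(𝒯^{(u,v)}(I₂;n)): maximum of μ over all products of exactly n matrices each L_u or R_v. -/
def levelMax (u v n : ℕ) : ℕ :=
  Finset.univ.sup (fun w : Fin n → Bool => matMax (wordProd u v (List.ofFn w)))

/-!
Conjugating by `diag(1, r)` with `r = √(u/v)` turns `L_u` and `R_v` into the symmetric shears
`(X, Y) ↦ (X + cY, Y)` and `(X, Y) ↦ (X, Y + cX)` with `c = √(uv) ≥ 1`, acting on rescaled rows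
`(X, Y) = (x, r y)`. For these, the Fibonacci argument applies: after `k` shears, the larger
coordinate is at most `F (k + 1)` and the smaller at most `F k`, where `F = genFib c r`,
i.e. `F 0 = 0`, `F 1 = r`, `F (k + 2) = c F (k + 1) + F k`. The alternating word
`(L_u R_v)ⁿ L_u` attains `F (2n + 2)` in the `(1, 0)` entry, and as `v ≤ u` makes `r ≥ 1`, the
unscaled entries are bounded by the rescaled ones.
-/

noncomputable def genFib (c r : ℝ) : ℕ → ℝ
  | 0 => 0
  | 1 => r
  | k + 2 => c * genFib c r (k + 1) + genFib c r k

def FibBox (c r : ℝ) (k : ℕ) (p : ℝ × ℝ) : Prop :=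
  (p.1 ≤ genFib c r (k + 1) ∧ p.2 ≤ genFib c r k) ∨
    (p.1 ≤ genFib c r k ∧ p.2 ≤ genFib c r (k + 1))

section genFib

variable {c r : ℝ}

theorem genFib_nonneg_and_le_succ (hc : 1 ≤ c) (hr : 0 ≤ r) (k : ℕ) :
    0 ≤ genFib c r k ∧ genFib c r k ≤ genFib c r (k + 1) := by
  induction k with
  | zero => simpa [genFib] using hr
  | succ k ih =>
    obtain ⟨h0, h1⟩ := ih
    refine ⟨h0.trans h1, ?_⟩
    rw [genFib]
    nlinarith

theorem genFib_le_succ (hc : 1 ≤ c) (hr : 0 ≤ r) (k : ℕ) : genFib c r k ≤ genFib c r (k + 1) :=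
  (genFib_nonneg_and_le_succ hc hr k).2

theorem FibBox.swap {k : ℕ} {p : ℝ × ℝ} (h : FibBox c r k p) : FibBox c r k p.swap := by
  rcases h with h | h
  · exact Or.inr ⟨h.2, h.1⟩
  · exact Or.inl ⟨h.2, h.1⟩

theorem FibBox.shearL (hc : 1 ≤ c) (hr : 0 ≤ r) {k : ℕ} {p : ℝ × ℝ} (h : FibBox c r k p) :
    FibBox c r (k + 1) (p.1 + c * p.2, p.2) := by
  have hk := genFib_le_succ hc hr k
  left
  rcases h with ⟨h₁, h₂⟩ | ⟨h₁, h₂⟩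
  · -- `F (k + 1) + c F k ≤ c F (k + 1) + F k` because `c ≥ 1` and `F` is monotone
    refine ⟨?_, h₂.trans hk⟩
    simp only [genFib]
    nlinarith
  · exact ⟨by simp only [genFib]; nlinarith, h₂⟩

theorem FibBox.le_genFib_succ (hc : 1 ≤ c) (hr : 0 ≤ r) {k : ℕ} {p : ℝ × ℝ}
    (h : FibBox c r k p) : p.1 ≤ genFib c r (k + 1) ∧ p.2 ≤ genFib c r (k + 1) := by
  have hk := genFib_le_succ hc hr k
  rcases h with ⟨h₁, h₂⟩ | ⟨h₁, h₂⟩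
  · exact ⟨h₁, h₂.trans hk⟩
  · exact ⟨h₁.trans hk, h₂⟩

theorem FibBox.shearR (hc : 1 ≤ c) (hr : 0 ≤ r) {k : ℕ} {p : ℝ × ℝ} (h : FibBox c r k p) :
    FibBox c r (k + 1) (p.1, p.2 + c * p.1) :=
  (h.swap.shearL hc hr).swap

end genFib

theorem matMax_le {M : Matrix (Fin 2) (Fin 2) ℕ} {B : ℕ} (h : ∀ i j, M i j ≤ B) : matMax M ≤ B :=
  max_le (max_le (h 0 0) (h 0 1)) (max_le (h 1 0) (h 1 1))

theorem le_matMax (M : Matrix (Fin 2) (Fin 2) ℕ) (i j : Fin 2) : M i j ≤ matMax M := by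
  fin_cases i <;> fin_cases j <;> simp [matMax]

theorem levelMax_le {u v k B : ℕ}
    (h : ∀ w : List Bool, w.length = k → matMax (wordProd u v w) ≤ B) : levelMax u v k ≤ B :=
  Finset.sup_le fun _ _ => h _ List.length_ofFn

theorem matMax_wordProd_le_levelMax (u v : ℕ) (w : List Bool) :
    matMax (wordProd u v w) ≤ levelMax u v w.length :=
  Finset.le_sup_of_le (Finset.mem_univ fun i => w[i]) (by simp)

theorem wordProd_append_singleton (u v : ℕ) (w : List Bool) (b : Bool) :
    wordProd u v (w ++ [b]) = wordProd u v w * if b then Rm v else Lm u := by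
  simp [wordProd]

def scaledRow (r : ℝ) (W : Matrix (Fin 2) (Fin 2) ℕ) (i : Fin 2) : ℝ × ℝ :=
  ((W i 0 : ℝ), r * W i 1)

section scaledRow

variable {u v : ℕ} {r c : ℝ}

theorem scaledRow_mul_Lm (huc : r * c = u) (W : Matrix (Fin 2) (Fin 2) ℕ) (i : Fin 2) :
    scaledRow r (W * Lm u) i =
      ((scaledRow r W i).1 + c * (scaledRow r W i).2, (scaledRow r W i).2) := by
  simp [scaledRow, Matrix.mul_apply, Lm, ← huc]
  ring

theorem scaledRow_mul_Rm (hvc : c = r * v) (W : Matrix (Fin 2) (Fin 2) ℕ) (i : Fin 2) :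
    scaledRow r (W * Rm v) i =
      ((scaledRow r W i).1, (scaledRow r W i).2 + c * (scaledRow r W i).1) := by
  simp [scaledRow, Matrix.mul_apply, Rm, hvc]
  ring

theorem fibBox_scaledRow_wordProd (hc : 1 ≤ c) (hr : 1 ≤ r) (huc : r * c = u) (hvc : c = r * v)
    (w : List Bool) (i : Fin 2) :
    FibBox c r w.length (scaledRow r (wordProd u v w) i) := by
  have hr₀ : (0 : ℝ) ≤ r := zero_le_one.trans hr
  induction w using List.reverseRecOn with
  | nil => fin_cases i <;> simp [FibBox, scaledRow, wordProd, genFib, hr]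
  | append_singleton w b ih =>
    rw [wordProd_append_singleton, List.length_append, List.length_singleton]
    cases b
    · simpa [scaledRow_mul_Lm huc] using ih.shearL hc hr₀
    · simpa [scaledRow_mul_Rm hvc] using ih.shearR hc hr₀

theorem wordProd_apply_le_genFib (hc : 1 ≤ c) (hr : 1 ≤ r) (huc : r * c = u) (hvc : c = r * v)
    (w : List Bool) (i j : Fin 2) :
    (wordProd u v w i j : ℝ) ≤ genFib c r (w.length + 1) := by
  obtain ⟨hx, hy⟩ := (fibBox_scaledRow_wordProd hc hr huc hvc w i).le_genFib_succ hc
    (zero_le_one.trans hr)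
  fin_cases j
  · exact hx
  · exact (le_mul_of_one_le_left (Nat.cast_nonneg _) hr).trans hy

theorem scaledRow_alternating (huc : r * c = u) (hvc : c = r * v) (n : ℕ) :
    scaledRow r ((Lm u * Rm v) ^ n * Lm u) 1 = (genFib c r (2 * n + 2), genFib c r (2 * n + 1)) := by
  induction n with
  | zero => simp [scaledRow, Lm, genFib, ← huc, mul_comm]
  | succ n ih =>
    have hsplit : (Lm u * Rm v) ^ (n + 1) * Lm u = (Lm u * Rm v) ^ n * Lm u * Rm v * Lm u := by
      simp only [pow_succ, Matrix.mul_assoc]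
    have h₃ : genFib c r (2 * (n + 1) + 1) = c * genFib c r (2 * n + 2) + genFib c r (2 * n + 1) :=
      rfl
    have h₄ : genFib c r (2 * (n + 1) + 2) =
        c * genFib c r (2 * (n + 1) + 1) + genFib c r (2 * n + 2) :=
      rfl
    rw [hsplit, scaledRow_mul_Lm huc, scaledRow_mul_Rm hvc, ih, h₄, h₃]
    simp only [Prod.mk.injEq]
    constructor <;> ring

end scaledRow

def alternatingWord : ℕ → List Bool
  | 0 => [false]
  | n + 1 => false :: true :: alternatingWord n

theorem length_alternatingWord (n : ℕ) : (alternatingWord n).length = 2 * n + 1 := by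
  induction n with
  | zero => rfl
  | succ n ih => rw [alternatingWord, List.length_cons, List.length_cons, ih]; ring

theorem wordProd_alternatingWord (u v n : ℕ) :
    wordProd u v (alternatingWord n) = (Lm u * Rm v) ^ n * Lm u := by
  induction n with
  | zero => simp [alternatingWord, wordProd]
  | succ n ih =>
    rw [pow_succ', Matrix.mul_assoc, ← ih]
    simp [alternatingWord, wordProd, Matrix.mul_assoc]

theorem exists_scaling {u v : ℕ} (hv : 1 ≤ v) (huv : v ≤ u) :
    ∃ r c : ℝ, 1 ≤ c ∧ 1 ≤ r ∧ r * c = u ∧ c = r * v := by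
  have hv' : (1 : ℝ) ≤ v := by exact_mod_cast hv
  have huv' : (v : ℝ) ≤ u := by exact_mod_cast huv
  have hsv : 0 < √(v : ℝ) := Real.sqrt_pos.2 (by linarith)
  refine ⟨√u / √v, √u * √v, ?_, ?_, ?_, ?_⟩
  · rw [← Real.sqrt_mul (by linarith)]
    exact Real.one_le_sqrt.2 (by nlinarith)
  · exact (one_le_div hsv).2 (Real.sqrt_le_sqrt huv')
  · field_simp
    rw [Real.sq_sqrt (by linarith)]
  · field_simp
    rw [Real.sq_sqrt (by linarith)]

theorem stmt1 (u v : ℕ) (hv : 1 ≤ v) (huv : v ≤ u) (n : ℕ) :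
    levelMax u v (2 * n + 1) = ((Lm u * Rm v) ^ n * Lm u) 1 0 := by
  obtain ⟨r, c, hc, hr, huc, hvc⟩ := exists_scaling hv huv
  have hentry : (((Lm u * Rm v) ^ n * Lm u) 1 0 : ℝ) = genFib c r (2 * n + 2) :=
    congrArg Prod.fst (scaledRow_alternating huc hvc n)
  apply le_antisymm
  · refine levelMax_le fun w hw => matMax_le fun i j => ?_
    have := wordProd_apply_le_genFib hc hr huc hvc w i j
    rw [hw, ← hentry] at this
    exact_mod_cast this
  · calc ((Lm u * Rm v) ^ n * Lm u) 1 0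
        ≤ matMax (wordProd u v (alternatingWord n)) := by
          rw [wordProd_alternatingWord]; exact le_matMax _ 1 0
      _ ≤ levelMax u v (2 * n + 1) := by
          rw [← length_alternatingWord n]; exact matMax_wordProd_le_levelMax u v _
end

section
/- Let u and v be positive integers and p a prime. Let w and w' be words over {0,1} (possibly of different lengths) with w ≠ w'. If every entry of M_{u,v}(w) and every entry of M_{u,v}(w') is strictly less than p, then the reductions modulo p of M_{u,v}(w) and M_{u,v}(w') (as 2×2 matrices over ℤ/pℤ) are distinct; in other words, the BSV hash has no collisions among such words. -/
open Matrix Finset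

/-!
Both generators have determinant one, so left multiplication by either is cancellable, and the
first letter of a nonempty word can be read off its matrix: `L_u N` has a larger second row sum
than first, `R_v N` the reverse, because every product has positive diagonal. Peeling off letters
shows that `w ↦ M_{u,v}(w)` is injective. Entries below `p` are recovered from their residues mod
`p`, so the hash is injective on such words as well.
-/

lemma Matrix.eq_of_map_natCast_eq {m n : Type*} {p : ℕ} {M N : Matrix m n ℕ}
    (hM : ∀ i j, M i j < p) (hN : ∀ i j, N i j < p)
    (h : M.map (Nat.cast : ℕ → ZMod p) = N.map (Nat.cast : ℕ → ZMod p)) : M = N := by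
  ext i j
  have hij := (ZMod.natCast_eq_natCast_iff' _ _ p).mp (congrFun₂ h i j)
  rwa [Nat.mod_eq_of_lt (hM i j), Nat.mod_eq_of_lt (hN i j)] at hij

lemma Matrix.mul_left_cancel_of_det_map_natCast_eq_one {n : Type*} [Fintype n] [DecidableEq n]
    {A N N' : Matrix n n ℕ} (hA : (A.map (Nat.cast : ℕ → ℤ)).det = 1) (h : A * N = A * N') :
    N = N' := by
  have hunit : IsUnit (A.map (Nat.cast : ℕ → ℤ)) := by
    rw [isUnit_iff_isUnit_det, hA]
    exact isUnit_one
  apply map_injective (f := (Nat.cast : ℕ → ℤ)) Nat.cast_injective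
  apply hunit.mul_left_cancel
  have := congrArg (Nat.castRingHom ℤ).mapMatrix h
  rwa [map_mul, map_mul] at this

lemma det_map_natCast_Lm (u : ℕ) : ((Lm u).map (Nat.cast : ℕ → ℤ)).det = 1 := by
  simp [Lm, det_fin_two]

lemma det_map_natCast_Rm (v : ℕ) : ((Rm v).map (Nat.cast : ℕ → ℤ)).det = 1 := by
  simp [Rm, det_fin_two]

lemma Lm_mul (u : ℕ) (N : Matrix (Fin 2) (Fin 2) ℕ) :
    Lm u * N = !![N 0 0, N 0 1; u * N 0 0 + N 1 0, u * N 0 1 + N 1 1] := by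
  ext i j
  fin_cases i <;> fin_cases j <;> simp [Lm, mul_apply, Fin.sum_univ_two]

lemma Rm_mul (v : ℕ) (N : Matrix (Fin 2) (Fin 2) ℕ) :
    Rm v * N = !![N 0 0 + v * N 1 0, N 0 1 + v * N 1 1; N 1 0, N 1 1] := by
  ext i j
  fin_cases i <;> fin_cases j <;> simp [Rm, mul_apply, Fin.sum_univ_two]

section wordProd

variable (u v : ℕ)

lemma wordProd_nil : wordProd u v [] = 1 := rfl

lemma wordProd_cons (b : Bool) (w : List Bool) :
    wordProd u v (b :: w) = (if b then Rm v else Lm u) * wordProd u v w := by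
  simp [wordProd]

lemma one_le_wordProd_diag (w : List Bool) :
    1 ≤ wordProd u v w 0 0 ∧ 1 ≤ wordProd u v w 1 1 := by
  induction w with
  | nil => simp [wordProd_nil]
  | cons b t ih =>
    rw [wordProd_cons]
    cases b <;> simp [Lm_mul, Rm_mul] <;> omega

def rowSumOrder (M : Matrix (Fin 2) (Fin 2) ℕ) : Ordering :=
  compare (M 0 0 + M 0 1) (M 1 0 + M 1 1)

lemma rowSumOrder_wordProd_nil : rowSumOrder (wordProd u v []) = .eq := by
  simp [rowSumOrder, wordProd_nil]

variable {u v}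

lemma rowSumOrder_wordProd_false (hu : 1 ≤ u) (w : List Bool) :
    rowSumOrder (wordProd u v (false :: w)) = .lt := by
  have hdiag := one_le_wordProd_diag u v w
  rw [rowSumOrder, compare_lt_iff_lt, wordProd_cons]
  simp only [Bool.false_eq_true, ite_false, Lm_mul, of_apply, cons_val', cons_val_zero,
    cons_val_one, empty_val', cons_val_fin_one]
  nlinarith

lemma rowSumOrder_wordProd_true (hv : 1 ≤ v) (w : List Bool) :
    rowSumOrder (wordProd u v (true :: w)) = .gt := by
  have hdiag := one_le_wordProd_diag u v w
  rw [rowSumOrder, compare_gt_iff_gt, wordProd_cons]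
  simp only [ite_true, Rm_mul, of_apply, cons_val', cons_val_zero, cons_val_one, empty_val',
    cons_val_fin_one]
  nlinarith

lemma head?_eq_of_wordProd_eq (hu : 1 ≤ u) (hv : 1 ≤ v) {w w' : List Bool}
    (h : wordProd u v w = wordProd u v w') : w.head? = w'.head? := by
  have horder := congrArg rowSumOrder h
  rcases w with _ | ⟨_ | _, s⟩ <;> rcases w' with _ | ⟨_ | _, t⟩ <;>
    simp [rowSumOrder_wordProd_nil, rowSumOrder_wordProd_false hu,
      rowSumOrder_wordProd_true hv] at horder ⊢

lemma wordProd_injective (hu : 1 ≤ u) (hv : 1 ≤ v) : Function.Injective (wordProd u v) := by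
  intro w w' h
  have hhead := head?_eq_of_wordProd_eq hu hv h
  induction w generalizing w' with
  | nil => cases w' <;> simp_all
  | cons a s ih =>
    cases w' with
    | nil => simp at hhead
    | cons b t =>
      obtain rfl : a = b := by simpa using hhead
      rw [wordProd_cons, wordProd_cons] at h
      have hst : wordProd u v s = wordProd u v t := by
        cases a
        · exact mul_left_cancel_of_det_map_natCast_eq_one (det_map_natCast_Lm u) h
        · exact mul_left_cancel_of_det_map_natCast_eq_one (det_map_natCast_Rm v) h
      rw [ih hst (head?_eq_of_wordProd_eq hu hv hst)]

end wordProd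

theorem stmt19_general (u v : ℕ) (hu : 1 ≤ u) (hv : 1 ≤ v) (p : ℕ)
    (w w' : List Bool) (hne : w ≠ w')
    (hw : ∀ i j : Fin 2, wordProd u v w i j < p)
    (hw' : ∀ i j : Fin 2, wordProd u v w' i j < p) :
    (wordProd u v w).map (Nat.cast : ℕ → ZMod p) ≠
      (wordProd u v w').map (Nat.cast : ℕ → ZMod p) :=
  fun h => hne (wordProd_injective hu hv (eq_of_map_natCast_eq hw hw' h))

theorem stmt19 (u v : ℕ) (hu : 1 ≤ u) (hv : 1 ≤ v) (p : ℕ) (hp : p.Prime)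
    (w w' : List Bool) (hne : w ≠ w')
    (hw : ∀ i j : Fin 2, wordProd u v w i j < p)
    (hw' : ∀ i j : Fin 2, wordProd u v w' i j < p) :
    (wordProd u v w).map (Nat.cast : ℕ → ZMod p) ≠
      (wordProd u v w').map (Nat.cast : ℕ → ZMod p) :=
  stmt19_general u v hu hv p w w' hne hw hw'
end
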